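/- Consider the Gaussian prior, projection, and lazy-map setting. Then the pushforward T#μ of μ under the lazy map T is absolutely continuous with respect to μ, with density d(T#μ)/dμ(m) = det(∇S⁻¹(Em)) · exp( ½‖Em‖² − ½‖S⁻¹(Em)‖² ) for μ-almost every m. In particular, the density depends on m only through the latent coordinate Em, and equals the ratio of the Lebesgue density of S#π to the Lebesgue density of π evaluated at Em. -/

import Mathlib

/-!
The lazy map `T` is a C¹ diffeomorphism with inverse `lazyMap C Ψ S⁻¹`, and since `EΨ = 1` the
Jacobian `1 - ΨE + Ψ ∇S(Em) E` of `T` has determinant `det ∇S(Em)`. Splitting `m` into its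
`C⁻¹`-orthogonal components `(I - P)m` and `Ψ(Em)` turns the Gaussian exponent at `T⁻¹ m` into
`mᵀC⁻¹m - ‖Em‖² + ‖S⁻¹(Em)‖²`, so the change of variables formula gives
`T#μ = μ.withDensity (ρ ∘ E)` with `ρ = det ∇S⁻¹ · exp(½‖·‖² - ½‖S⁻¹·‖²)`. The case `C = Ψ = 1`
(where `T = S`) identifies `ρ` with `d(S#π)/dπ`; since `E` is a linear surjection, Lebesgue-null
(equivalently `π`-null) sets in the latent space pull back to `μ`-null sets.
-/

open MeasureTheory Matrix Real

noncomputable section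

/-- Gaussian measure `N(m₀, C)` on `ℝⁿ`, defined via its Lebesgue density. -/
def gaussianOf {n : ℕ} (m₀ : Fin n → ℝ) (C : Matrix (Fin n) (Fin n) ℝ) :
    Measure (Fin n → ℝ) :=
  volume.withDensity fun m =>
    ENNReal.ofReal (((2 * π) ^ n * C.det) ^ (-(1 : ℝ) / 2) *
      Real.exp (-(1 / 2) * ((m - m₀) ⬝ᵥ C⁻¹ *ᵥ (m - m₀))))

/-- Standard Gaussian `N(0, I_r)` on `ℝʳ`. -/
def stdGaussian (r : ℕ) : Measure (Fin r → ℝ) := gaussianOf 0 1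

/-- Jacobian matrix of `f : ℝⁿ → ℝᵈ` at `x`. -/
def jac {n d : ℕ} (f : (Fin n → ℝ) → (Fin d → ℝ)) (x : Fin n → ℝ) :
    Matrix (Fin d) (Fin n) ℝ :=
  Matrix.of fun i j => fderiv ℝ f x (Pi.single j 1) i

/-- Kullback–Leibler divergence `∫ log (dν₁/dν₂) dν₁` (real-valued). -/
def KLdiv {α : Type*} [MeasurableSpace α] (ν₁ ν₂ : Measure α) : ℝ :=
  ∫ x, Real.log ((ν₁.rnDeriv ν₂ x).toReal) ∂ν₁

/-- The potential (negative log-likelihood) `Φʸ(m) = ½ (G(m)−y)ᵀΓ⁻¹(G(m)−y)`. -/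
def potential {n d : ℕ} (Γ : Matrix (Fin d) (Fin d) ℝ)
    (G : (Fin n → ℝ) → (Fin d → ℝ)) (y : Fin d → ℝ) (m : Fin n → ℝ) : ℝ :=
  (1 / 2) * ((G m - y) ⬝ᵥ Γ⁻¹ *ᵥ (G m - y))

/-- The normalization constant `Zʸ = ∫ exp(−Φʸ) dμ`. -/
def Znorm {n d : ℕ} (C : Matrix (Fin n) (Fin n) ℝ) (Γ : Matrix (Fin d) (Fin d) ℝ)
    (G : (Fin n → ℝ) → (Fin d → ℝ)) (y : Fin d → ℝ) : ℝ :=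
  ∫ m, Real.exp (-(potential Γ G y m)) ∂(gaussianOf 0 C)

/-- The Bayesian posterior `dμʸ/dμ = exp(−Φʸ)/Zʸ`. -/
def posterior {n d : ℕ} (C : Matrix (Fin n) (Fin n) ℝ) (Γ : Matrix (Fin d) (Fin d) ℝ)
    (G : (Fin n → ℝ) → (Fin d → ℝ)) (y : Fin d → ℝ) : Measure (Fin n → ℝ) :=
  (gaussianOf 0 C).withDensity fun m =>
    ENNReal.ofReal (Real.exp (-(potential Γ G y m)) / Znorm C Γ G y)

/-- The complement prior `μ⊥`: pushforward of `μ = N(0,C)` under `m ↦ (I − P)m`,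
where `P = Ψ(ΨᵀC⁻¹)` is the projector onto the reduced subspace. -/
def compPrior {n r : ℕ} (C : Matrix (Fin n) (Fin n) ℝ) (Ψ : Matrix (Fin n) (Fin r) ℝ) :
    Measure (Fin n → ℝ) :=
  (gaussianOf 0 C).map fun m => m - (Ψ * (Ψᵀ * C⁻¹)) *ᵥ m

/-- The lazy map `T(m) = (I − P)m + Ψ S(Em)`, where `E = ΨᵀC⁻¹` and `P = ΨE`. -/
def lazyMap {n r : ℕ} (C : Matrix (Fin n) (Fin n) ℝ) (Ψ : Matrix (Fin n) (Fin r) ℝ)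
    (S : (Fin r → ℝ) → (Fin r → ℝ)) (m : Fin n → ℝ) : Fin n → ℝ :=
  (m - (Ψ * (Ψᵀ * C⁻¹)) *ᵥ m) + Ψ *ᵥ S ((Ψᵀ * C⁻¹) *ᵥ m)

section Jacobian

variable {k n d : ℕ}

theorem jac_eq_toMatrix' (f : (Fin n → ℝ) → Fin d → ℝ) (x : Fin n → ℝ) :
    jac f x = LinearMap.toMatrix' (fderiv ℝ f x : (Fin n → ℝ) →ₗ[ℝ] Fin d → ℝ) := by
  ext i j
  simp [jac, LinearMap.toMatrix'_apply]

theorem jac_mulVec (f : (Fin n → ℝ) → Fin d → ℝ) (x v : Fin n → ℝ) :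
    jac f x *ᵥ v = fderiv ℝ f x v := by
  rw [jac_eq_toMatrix', LinearMap.toMatrix'_mulVec, ContinuousLinearMap.coe_coe]

theorem det_jac (f : (Fin n → ℝ) → Fin n → ℝ) (x : Fin n → ℝ) :
    (jac f x).det = (fderiv ℝ f x).det := by
  rw [jac_eq_toMatrix', LinearMap.det_toMatrix', ContinuousLinearMap.det]

theorem measurable_det_jac (f : (Fin n → ℝ) → Fin n → ℝ) :
    Measurable fun x => (jac f x).det := by
  simp_rw [det_jac]
  exact ContinuousLinearMap.continuous_det.measurable.comp (measurable_fderiv ℝ f)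

theorem jac_comp {g : (Fin d → ℝ) → Fin k → ℝ} {f : (Fin n → ℝ) → Fin d → ℝ} {x : Fin n → ℝ}
    (hg : DifferentiableAt ℝ g (f x)) (hf : DifferentiableAt ℝ f x) :
    jac (g ∘ f) x = jac g (f x) * jac f x := by
  rw [jac_eq_toMatrix', fderiv_comp x hg hf, ContinuousLinearMap.toLinearMap_comp,
    LinearMap.toMatrix'_comp, jac_eq_toMatrix', jac_eq_toMatrix']

theorem jac_id (x : Fin n → ℝ) : jac id x = 1 := by
  simp [jac_eq_toMatrix', fderiv_id, LinearMap.toMatrix'_id]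

theorem det_jac_pos_of_leftInverse {f g : (Fin n → ℝ) → Fin n → ℝ}
    (hf : Differentiable ℝ f) (hg : Differentiable ℝ g)
    (hgf : Function.LeftInverse g f) (hfg : Function.RightInverse g f)
    (hpos : ∀ x, 0 < (jac f x).det) (y : Fin n → ℝ) : 0 < (jac g y).det := by
  have hchain := jac_comp (hg (f (g y))) (hf (g y))
  rw [hgf.comp_eq_id, jac_id, hfg y] at hchain
  have hprod : (jac g y).det * (jac f (g y)).det = 1 := by
    rw [← Matrix.det_mul, ← hchain, Matrix.det_one]
  exact pos_of_mul_pos_left (hprod ▸ one_pos) (hpos _).le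

end Jacobian

open scoped ENNReal

theorem map_withDensity_eq_withDensity_abs_det_mul {E : Type*} [NormedAddCommGroup E]
    [NormedSpace ℝ E] [FiniteDimensional ℝ E] [MeasurableSpace E] [BorelSpace E]
    (μ : Measure E) [μ.IsAddHaarMeasure] {f g : E → E} {g' : E → E →L[ℝ] E}
    (hf : Measurable f) (hg : ∀ x, HasFDerivAt g (g' x) x)
    (hgf : Function.LeftInverse g f) (hfg : Function.RightInverse g f) (ρ : E → ℝ≥0∞) :
    (μ.withDensity ρ).map f = μ.withDensity fun x => ENNReal.ofReal |(g' x).det| * ρ (g x) := by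
  ext s hs
  rw [Measure.map_apply hf hs, withDensity_apply _ (hf hs), withDensity_apply _ hs,
    ← Set.image_eq_preimage_of_inverse hfg hgf,
    lintegral_image_eq_lintegral_abs_det_fderiv_mul μ hs (fun x _ => (hg x).hasFDerivWithinAt)
      hfg.injective.injOn]

theorem det_one_sub_mul_add_mul_mul {n r : ℕ} {A : Matrix (Fin n) (Fin r) ℝ}
    {B : Matrix (Fin r) (Fin n) ℝ} (hBA : B * A = 1) (J : Matrix (Fin r) (Fin r) ℝ) :
    (1 - A * B + A * J * B).det = J.det := by
  have hsplit : 1 - A * B + A * J * B = 1 + A * (J - 1) * B := by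
    rw [Matrix.mul_sub, Matrix.sub_mul, Matrix.mul_one]; abel
  rw [hsplit, Matrix.mul_assoc, Matrix.det_one_add_mul_comm, Matrix.mul_assoc, hBA,
    Matrix.mul_one, add_sub_cancel]

section LazyMap

variable {n r : ℕ} (C : Matrix (Fin n) (Fin n) ℝ) (Ψ : Matrix (Fin n) (Fin r) ℝ)

theorem encoder_mulVec_lazyMap (hΨ : Ψᵀ * C⁻¹ * Ψ = 1) (S : (Fin r → ℝ) → Fin r → ℝ)
    (m : Fin n → ℝ) : (Ψᵀ * C⁻¹) *ᵥ lazyMap C Ψ S m = S ((Ψᵀ * C⁻¹) *ᵥ m) := by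
  simp only [lazyMap, Matrix.mulVec_add, Matrix.mulVec_sub, Matrix.mulVec_mulVec,
    ← Matrix.mul_assoc, hΨ, Matrix.one_mul, Matrix.one_mulVec, sub_self, zero_add]

theorem lazyMap_leftInverse (hΨ : Ψᵀ * C⁻¹ * Ψ = 1) {S S' : (Fin r → ℝ) → Fin r → ℝ}
    (h : Function.LeftInverse S' S) :
    Function.LeftInverse (lazyMap C Ψ S') (lazyMap C Ψ S) := by
  intro m
  rw [lazyMap, encoder_mulVec_lazyMap C Ψ hΨ, h, ← Matrix.mulVec_mulVec,
    encoder_mulVec_lazyMap C Ψ hΨ, lazyMap, ← Matrix.mulVec_mulVec]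
  abel

theorem lazyMap_one_one (S : (Fin r → ℝ) → Fin r → ℝ) : lazyMap 1 1 S = S := by
  funext z
  simp [lazyMap]

theorem hasFDerivAt_lazyMap {S : (Fin r → ℝ) → Fin r → ℝ} {m : Fin n → ℝ}
    (hS : DifferentiableAt ℝ S ((Ψᵀ * C⁻¹) *ᵥ m)) :
    HasFDerivAt (lazyMap C Ψ S) (LinearMap.toContinuousLinearMap (Matrix.toLin'
      (1 - Ψ * (Ψᵀ * C⁻¹) + Ψ * jac S ((Ψᵀ * C⁻¹) *ᵥ m) * (Ψᵀ * C⁻¹)))) m := by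
  have hlin : ∀ {a b : ℕ} (A : Matrix (Fin a) (Fin b) ℝ) (x : Fin b → ℝ),
      HasFDerivAt (A *ᵥ ·) (LinearMap.toContinuousLinearMap (Matrix.toLin' A)) x :=
    fun A x => (LinearMap.toContinuousLinearMap (Matrix.toLin' A)).hasFDerivAt
  have hsum := ((hasFDerivAt_id m).sub (hlin (Ψ * (Ψᵀ * C⁻¹)) m)).add
    ((hlin Ψ _).comp m (hS.hasFDerivAt.comp m (hlin (Ψᵀ * C⁻¹) m)))
  refine hsum.congr_fderiv ?_
  ext1 v
  simp [← Matrix.mulVec_mulVec, jac_mulVec]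

theorem differentiable_lazyMap {S : (Fin r → ℝ) → Fin r → ℝ} (hS : Differentiable ℝ S) :
    Differentiable ℝ (lazyMap C Ψ S) :=
  fun _ => (hasFDerivAt_lazyMap C Ψ (hS _)).differentiableAt

theorem dotProduct_inv_mulVec_mulVec (hC : C.IsSymm) (v : Fin n → ℝ) (w : Fin r → ℝ) :
    v ⬝ᵥ C⁻¹ *ᵥ (Ψ *ᵥ w) = (Ψᵀ * C⁻¹) *ᵥ v ⬝ᵥ w := by
  rw [Matrix.mulVec_mulVec, Matrix.dotProduct_mulVec, ← Matrix.mulVec_transpose,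
    Matrix.transpose_mul, hC.inv.eq]

theorem dotProduct_inv_mulVec_lazyMap (hC : C.IsSymm) (hΨ : Ψᵀ * C⁻¹ * Ψ = 1)
    (S : (Fin r → ℝ) → Fin r → ℝ) (m : Fin n → ℝ) :
    lazyMap C Ψ S m ⬝ᵥ C⁻¹ *ᵥ lazyMap C Ψ S m =
      m ⬝ᵥ C⁻¹ *ᵥ m - (Ψᵀ * C⁻¹) *ᵥ m ⬝ᵥ (Ψᵀ * C⁻¹) *ᵥ m +
        S ((Ψᵀ * C⁻¹) *ᵥ m) ⬝ᵥ S ((Ψᵀ * C⁻¹) *ᵥ m) := by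
  have hcross : ∀ (w : Fin r → ℝ) (v : Fin n → ℝ),
      Ψ *ᵥ w ⬝ᵥ C⁻¹ *ᵥ v = w ⬝ᵥ (Ψᵀ * C⁻¹) *ᵥ v := by
    intro w v
    rw [Matrix.dotProduct_mulVec, ← Matrix.mulVec_transpose, hC.inv.eq, dotProduct_comm,
      dotProduct_inv_mulVec_mulVec C Ψ hC, dotProduct_comm]
  have hEΨ : ∀ w : Fin r → ℝ, (Ψᵀ * C⁻¹) *ᵥ (Ψ *ᵥ w) = w := fun w => by
    rw [Matrix.mulVec_mulVec, hΨ, Matrix.one_mulVec]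
  simp only [lazyMap, ← Matrix.mulVec_mulVec, Matrix.mulVec_add, Matrix.mulVec_sub,
    dotProduct_add, dotProduct_sub, add_dotProduct, sub_dotProduct,
    dotProduct_inv_mulVec_mulVec C Ψ hC, hcross, hEΨ]
  ring

end LazyMap

def latentDensityRatio {r : ℕ} (Sinv : (Fin r → ℝ) → Fin r → ℝ) (z : Fin r → ℝ) : ℝ :=
  (jac Sinv z).det * Real.exp ((1 / 2) * (z ⬝ᵥ z) - (1 / 2) * (Sinv z ⬝ᵥ Sinv z))

theorem latentDensityRatio_nonneg {r : ℕ} {Sinv : (Fin r → ℝ) → Fin r → ℝ} {z : Fin r → ℝ}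
    (hz : 0 ≤ (jac Sinv z).det) : 0 ≤ latentDensityRatio Sinv z :=
  mul_nonneg hz (Real.exp_pos _).le

theorem measurable_latentDensityRatio {r : ℕ} {Sinv : (Fin r → ℝ) → Fin r → ℝ}
    (hSinv : Continuous Sinv) : Measurable (latentDensityRatio Sinv) := by
  unfold latentDensityRatio
  exact (measurable_det_jac Sinv).mul (by fun_prop)

section Gaussian

variable {n : ℕ} (m₀ : Fin n → ℝ) (C : Matrix (Fin n) (Fin n) ℝ)

theorem measurable_gaussianDensity : Measurable fun m : Fin n → ℝ =>
    ENNReal.ofReal (((2 * π) ^ n * C.det) ^ (-(1 : ℝ) / 2) *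
      Real.exp (-(1 / 2) * ((m - m₀) ⬝ᵥ C⁻¹ *ᵥ (m - m₀)))) := by
  fun_prop

instance : SigmaFinite (gaussianOf m₀ C) :=
  SigmaFinite.withDensity_ofReal _

theorem gaussianOf_absolutelyContinuous : gaussianOf m₀ C ≪ volume :=
  withDensity_absolutelyContinuous _ _

theorem volume_absolutelyContinuous_gaussianOf (hC : 0 < C.det) : volume ≪ gaussianOf m₀ C :=
  withDensity_absolutelyContinuous' (measurable_gaussianDensity m₀ C).aemeasurable
    (Filter.Eventually.of_forall fun _ => (ENNReal.ofReal_pos.2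
      (mul_pos (Real.rpow_pos_of_pos (by positivity) _) (Real.exp_pos _))).ne')

end Gaussian

theorem gaussianOf_map_lazyMap {n r : ℕ} (C : Matrix (Fin n) (Fin n) ℝ) (hC : C.IsSymm)
    (Ψ : Matrix (Fin n) (Fin r) ℝ) (hΨ : Ψᵀ * C⁻¹ * Ψ = 1) {S Sinv : (Fin r → ℝ) → Fin r → ℝ}
    (hS : Differentiable ℝ S) (hSinv : Differentiable ℝ Sinv)
    (hli : Function.LeftInverse Sinv S) (hri : Function.RightInverse Sinv S)
    (hdet : ∀ z, 0 < (jac S z).det) :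
    (gaussianOf 0 C).map (lazyMap C Ψ S) =
      (gaussianOf 0 C).withDensity
        fun m => ENNReal.ofReal (latentDensityRatio Sinv ((Ψᵀ * C⁻¹) *ᵥ m)) := by
  have hT := (differentiable_lazyMap C Ψ hS).continuous.measurable
  have hdetinv := det_jac_pos_of_leftInverse hS hSinv hli hri hdet
  have hratio : Measurable fun m : Fin n → ℝ =>
      ENNReal.ofReal (latentDensityRatio Sinv ((Ψᵀ * C⁻¹) *ᵥ m)) :=
    ENNReal.measurable_ofReal.comp
      ((measurable_latentDensityRatio hSinv.continuous).comp (by fun_prop))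
  rw [gaussianOf, map_withDensity_eq_withDensity_abs_det_mul volume hT
    (fun m => hasFDerivAt_lazyMap C Ψ (hSinv _)) (lazyMap_leftInverse C Ψ hΨ hli)
    (lazyMap_leftInverse C Ψ hΨ hri), ← withDensity_mul volume (measurable_gaussianDensity 0 C)
    hratio]
  congr 1
  funext m
  rw [Pi.mul_apply, ContinuousLinearMap.det, LinearMap.coe_toContinuousLinearMap,
    LinearMap.det_toLin', det_one_sub_mul_add_mul_mul hΨ, abs_of_pos (hdetinv _), sub_zero,
    sub_zero, dotProduct_inv_mulVec_lazyMap C Ψ hC hΨ, ← ENNReal.ofReal_mul (hdetinv _).le,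
    ← ENNReal.ofReal_mul' (latentDensityRatio_nonneg (hdetinv _).le), latentDensityRatio]
  congr 1
  set q := m ⬝ᵥ C⁻¹ *ᵥ m
  set a := (Ψᵀ * C⁻¹) *ᵥ m ⬝ᵥ (Ψᵀ * C⁻¹) *ᵥ m
  set b := Sinv ((Ψᵀ * C⁻¹) *ᵥ m) ⬝ᵥ Sinv ((Ψᵀ * C⁻¹) *ᵥ m)
  rw [show -(1 / 2) * (q - a + b) = -(1 / 2) * q + (1 / 2 * a - 1 / 2 * b) by ring, Real.exp_add]
  ring

theorem stdGaussian_map {r : ℕ} {S Sinv : (Fin r → ℝ) → Fin r → ℝ}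
    (hS : Differentiable ℝ S) (hSinv : Differentiable ℝ Sinv)
    (hli : Function.LeftInverse Sinv S) (hri : Function.RightInverse Sinv S)
    (hdet : ∀ z, 0 < (jac S z).det) :
    (stdGaussian r).map S =
      (stdGaussian r).withDensity fun z => ENNReal.ofReal (latentDensityRatio Sinv z) := by
  simpa [stdGaussian, lazyMap_one_one] using
    gaussianOf_map_lazyMap 1 Matrix.isSymm_one (1 : Matrix (Fin r) (Fin r) ℝ) (by simp)
      hS hSinv hli hri hdet

/-- lazy map pushforward density, eq. (lazy_map_density).
`T#μ ≪ μ` with density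
`d(T#μ)/dμ(m) = det ∇S⁻¹(Em) · exp(½‖Em‖² − ½‖S⁻¹(Em)‖²)`; in particular the
density depends on `m` only through `Em` and equals the density of `S#π`
with respect to `π` evaluated at `Em`. -/
theorem lazy_map_pushforward_density
    {n r : ℕ} (C : Matrix (Fin n) (Fin n) ℝ) (hC : C.PosDef)
    (Ψ : Matrix (Fin n) (Fin r) ℝ) (hΨ : Ψᵀ * C⁻¹ * Ψ = 1)
    (S Sinv : (Fin r → ℝ) → (Fin r → ℝ))
    (hS : ContDiff ℝ 1 S) (hSinv : ContDiff ℝ 1 Sinv)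
    (hli : Function.LeftInverse Sinv S) (hri : Function.RightInverse Sinv S)
    (hdet : ∀ z, 0 < (jac S z).det) :
    (gaussianOf 0 C).map (lazyMap C Ψ S) ≪ gaussianOf 0 C ∧
      (∀ᵐ m ∂(gaussianOf 0 C),
        ((((gaussianOf 0 C).map (lazyMap C Ψ S)).rnDeriv (gaussianOf 0 C)) m).toReal =
          (jac Sinv ((Ψᵀ * C⁻¹) *ᵥ m)).det *
            Real.exp ((1 / 2) * (((Ψᵀ * C⁻¹) *ᵥ m) ⬝ᵥ ((Ψᵀ * C⁻¹) *ᵥ m)) -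
              (1 / 2) * (Sinv ((Ψᵀ * C⁻¹) *ᵥ m) ⬝ᵥ Sinv ((Ψᵀ * C⁻¹) *ᵥ m)))) ∧
      (∀ᵐ m ∂(gaussianOf 0 C),
        (((gaussianOf 0 C).map (lazyMap C Ψ S)).rnDeriv (gaussianOf 0 C)) m =
          (((stdGaussian r).map S).rnDeriv (stdGaussian r)) ((Ψᵀ * C⁻¹) *ᵥ m)) := by
  have hS' := hS.differentiable one_ne_zero
  have hSinv' := hSinv.differentiable one_ne_zero
  have hdetinv := det_jac_pos_of_leftInverse hS' hSinv' hli hri hdet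
  have hpush := gaussianOf_map_lazyMap C (Matrix.isHermitian_iff_isSymm.1 hC.isHermitian) Ψ hΨ
    hS' hSinv' hli hri hdet
  set F := fun z => ENNReal.ofReal (latentDensityRatio Sinv z)
  have hF : Measurable F :=
    ENNReal.measurable_ofReal.comp (measurable_latentDensityRatio hSinv'.continuous)
  have hrn : ((gaussianOf 0 C).map (lazyMap C Ψ S)).rnDeriv (gaussianOf 0 C)
      =ᵐ[gaussianOf 0 C] fun m => F ((Ψᵀ * C⁻¹) *ᵥ m) :=
    hpush ▸ Measure.rnDeriv_withDensity _ (hF.comp (by fun_prop))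
  have hlatent : ∀ᵐ z, ((stdGaussian r).map S).rnDeriv (stdGaussian r) z = F z :=
    (volume_absolutelyContinuous_gaussianOf 0 1 (by simp)).ae_le
      (stdGaussian_map hS' hSinv' hli hri hdet ▸ Measure.rnDeriv_withDensity _ hF)
  have hencoder : Function.Surjective (Ψᵀ * C⁻¹).mulVecLin := fun z =>
    ⟨Ψ *ᵥ z, by rw [Matrix.mulVecLin_apply, Matrix.mulVec_mulVec, hΨ, Matrix.one_mulVec]⟩
  have hpull : ∀ᵐ m, ((stdGaussian r).map S).rnDeriv (stdGaussian r) ((Ψᵀ * C⁻¹) *ᵥ m) =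
      F ((Ψᵀ * C⁻¹) *ᵥ m) :=
    (ae_comp_linearMap_mem_iff _ volume volume hencoder
      (measurableSet_eq_fun (Measure.measurable_rnDeriv _ _) hF)).2 hlatent
  refine ⟨hpush ▸ withDensity_absolutelyContinuous _ _, ?_, ?_⟩
  · filter_upwards [hrn] with m hm
    rw [hm, ENNReal.toReal_ofReal (latentDensityRatio_nonneg (hdetinv _).le), latentDensityRatio]
  · filter_upwards [hrn, (gaussianOf_absolutelyContinuous 0 C).ae_le hpull] with m hm hm'
    rw [hm, hm']
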